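/- With J_t^n(f) as above, the nonlinearity N(f) of f is the minimum t ≥ 0 such that V(J_{t+1}^n(f)) ≠ ∅. -/
import Mathlib


open Finset MvPolynomial

/-- Hamming distance between two Boolean functions. -/
def bdist {n : ℕ} (f g : (Fin n → ZMod 2) → ZMod 2) : ℕ :=
  (Finset.univ.filter fun v => f v ≠ g v).card

/-- A Boolean function is affine if it is `x ↦ a₀ + Σ aᵢ xᵢ`. -/
def IsAffine {n : ℕ} (f : (Fin n → ZMod 2) → ZMod 2) : Prop :=
  ∃ a : Fin (n + 1) → ZMod 2, ∀ x, f x = a 0 + ∑ i : Fin n, a i.succ * x i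

/-- Nonlinearity: the minimum distance from `f` to an affine function. -/
noncomputable def nonlin {n : ℕ} (f : (Fin n → ZMod 2) → ZMod 2) : ℕ :=
  sInf {d | ∃ α, IsAffine α ∧ d = bdist f α}

/-- Walsh transform of a Boolean function. -/
def walsh {n : ℕ} (f : (Fin n → ZMod 2) → ZMod 2) (v : Fin n → ZMod 2) : ℤ :=
  ∑ y : Fin n → ZMod 2, (-1 : ℤ) ^ ((∑ i, v i * y i) + f y).val

noncomputable def gpoly {n : ℕ} (f : (Fin n → ZMod 2) → ZMod 2) (p : Fin n → ZMod 2) :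
    MvPolynomial (Fin (n + 1)) (ZMod 2) :=
  X 0 + (∑ i : Fin n, C (p i) * X i.succ) + C (f p)

noncomputable def Jideal {n : ℕ} (t : ℕ) (f : (Fin n → ZMod 2) → ZMod 2) :
    Ideal (MvPolynomial (Fin (n + 1)) (ZMod 2)) :=
  Ideal.span
    ((Set.range fun i : Fin (n + 1) => (X i) ^ 2 - X i) ∪
      {q | ∃ T : Finset (Fin n → ZMod 2), T.card = t ∧ q = ∏ p ∈ T, gpoly f p})

def alphaFun {n : ℕ} (a : Fin (n + 1) → ZMod 2) : (Fin n → ZMod 2) → ZMod 2 :=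
  fun x => a 0 + ∑ i : Fin n, a i.succ * x i

lemma isAffine_alphaFun {n : ℕ} (a : Fin (n + 1) → ZMod 2) : IsAffine (alphaFun a) :=
  ⟨a, fun _ => rfl⟩

lemma zmod2_add_eq_zero (u v : ZMod 2) : u + v = 0 ↔ v = u := by
  constructor
  · intro h
    have : v = -u := by linear_combination h
    rw [this, CharTwo.neg_eq]
  · intro h; rw [h, CharTwo.add_self_eq_zero]

lemma eval_gpoly {n : ℕ} (f : (Fin n → ZMod 2) → ZMod 2) (a : Fin (n + 1) → ZMod 2)
    (p : Fin n → ZMod 2) : eval a (gpoly f p) = (alphaFun a p + f p) := by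
  simp [gpoly, alphaFun, mul_comm]

lemma eval_gpoly_eq_zero {n : ℕ} (f : (Fin n → ZMod 2) → ZMod 2) (a : Fin (n + 1) → ZMod 2)
    (p : Fin n → ZMod 2) : eval a (gpoly f p) = 0 ↔ f p = alphaFun a p := by
  rw [eval_gpoly, zmod2_add_eq_zero]

lemma vanish_iff {n : ℕ} (t : ℕ) (f : (Fin n → ZMod 2) → ZMod 2) (a : Fin (n + 1) → ZMod 2) :
    (∀ q ∈ Jideal (t + 1) f, MvPolynomial.eval a q = 0) ↔ bdist f (alphaFun a) ≤ t := by
  constructor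
  · intro h
    by_contra hc
    push_neg at hc
    obtain ⟨T, hT, hTc⟩ := Finset.exists_subset_card_eq hc
    have hmem : (∏ p ∈ T, gpoly f p) ∈ Jideal (t + 1) f := by
      apply Ideal.subset_span
      exact Or.inr ⟨T, hTc, rfl⟩
    have := h _ hmem
    rw [map_prod] at this
    obtain ⟨p, hpT, hp0⟩ := Finset.prod_eq_zero_iff.mp this
    have := hT hpT
    rw [Finset.mem_filter] at this
    exact this.2 ((eval_gpoly_eq_zero f a p).mp hp0)
  · intro h q hq
    have hker : Jideal (t + 1) f ≤ RingHom.ker (eval a) := by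
      rw [Jideal, Ideal.span_le]
      rintro q (⟨i, rfl⟩ | ⟨T, hTc, rfl⟩)
      · simp [RingHom.mem_ker, ZMod.pow_card]
      · simp only [SetLike.mem_coe, RingHom.mem_ker, map_prod]
        have hbd : (Finset.univ.filter fun v => f v ≠ alphaFun a v).card ≤ t := h
        have : ¬ T ⊆ Finset.univ.filter fun v => f v ≠ alphaFun a v := by
          intro hsub
          have := Finset.card_le_card hsub
          omega
        obtain ⟨p, hpT, hpD⟩ := Finset.not_subset.mp this
        refine Finset.prod_eq_zero hpT ?_
        rw [eval_gpoly_eq_zero]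
        simpa using hpD
    exact hker hq

/-- **Nonlinearity via Simonetti's systems**: `N(f)` is the minimum `t` such that
`V(J_{t+1}^n(f)) ≠ ∅`. -/
theorem nonlin_eq_sInf_Jideal {n : ℕ} (f : (Fin n → ZMod 2) → ZMod 2) :
    nonlin f =
      sInf {t : ℕ |
        ∃ a : Fin (n + 1) → ZMod 2, ∀ q ∈ Jideal (t + 1) f, MvPolynomial.eval a q = 0} := by
  have hne : {d | ∃ α, IsAffine α ∧ d = bdist f α}.Nonempty :=
    ⟨bdist f (alphaFun 0), alphaFun 0, isAffine_alphaFun 0, rfl⟩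
  have hmem := Nat.sInf_mem hne
  obtain ⟨α, ⟨a, hα⟩, hd⟩ := hmem
  have hαa : α = alphaFun a := funext hα
  have hset : {t : ℕ |
      ∃ a : Fin (n + 1) → ZMod 2, ∀ q ∈ Jideal (t + 1) f, MvPolynomial.eval a q = 0} =
      Set.Ici (nonlin f) := by
    ext t
    simp only [Set.mem_setOf_eq, Set.mem_Ici]
    constructor
    · rintro ⟨b, hb⟩
      have := (vanish_iff t f b).mp hb
      calc nonlin f ≤ bdist f (alphaFun b) :=
            Nat.sInf_le ⟨alphaFun b, isAffine_alphaFun b, rfl⟩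
        _ ≤ t := this
    · intro ht
      refine ⟨a, (vanish_iff t f a).mpr ?_⟩
      rw [← hαa, ← hd]
      exact ht
  rw [hset, csInf_Ici]
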